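/- arXiv:math/0406573 — 2 statements merged into one kernel-verified Lean document; each statement's English description precedes it below -/
import Mathlib

section
/- Projection–slice theorem for the matrix Radon transform: Let m ≥ 1 and 1 ≤ k ≤ n−m, and let f ∈ L¹(M_{n,m}). For each γ ∈ O(n), the Radon transform (Rf)(γ,t) is defined for Lebesgue-almost every t ∈ M_{n−k,m} and is integrable as a function of t, and for every γ ∈ O(n) and every b ∈ M_{n−k,m} one has ∫_{M_{n−k,m}} exp(i·tr(b′t))·(Rf)(γ,t) dt = (ℱf)(γ·[0;b]), where [0;b] ∈ M_{n,m} is the block matrix whose first k rows are 0 and whose last n−k rows are b. -/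
open MeasureTheory Matrix
open scoped ENNReal

/-- Lebesgue measure on the space of real `p × q` matrices, identified with `ℝ^{pq}`. -/
noncomputable instance matMS (p q : ℕ) : MeasureSpace (Matrix (Fin p) (Fin q) ℝ) :=
  (inferInstance : MeasureSpace (Fin p → Fin q → ℝ))

/-- Block matrix whose first `k` rows are `ω` and last `n - k` rows are `t`. -/
def blockRows {n k m : ℕ} (ω : Matrix (Fin k) (Fin m) ℝ)
    (t : Matrix (Fin (n - k)) (Fin m) ℝ) : Matrix (Fin n) (Fin m) ℝ :=
  fun i j =>
    if h : (i : ℕ) < k then ω ⟨i, h⟩ j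
    else t ⟨(i : ℕ) - k, by have := i.isLt; omega⟩ j

/-- The matrix formed by the last `n - k` rows of `y`. -/
def lowerRows {n m : ℕ} (k : ℕ) (y : Matrix (Fin n) (Fin m) ℝ) :
    Matrix (Fin (n - k)) (Fin m) ℝ :=
  fun i j => y ⟨k + i, by have := i.isLt; omega⟩ j

/-- The Siegel gamma function `Γ_m(α) = π^{m(m-1)/4} ∏_{j=0}^{m-1} Γ(α - j/2)`. -/
noncomputable def SiegelGamma (m : ℕ) (α : ℝ) : ℝ :=
  Real.pi ^ ((m : ℝ) * ((m : ℝ) - 1) / 4) * ∏ j ∈ Finset.range m, Real.Gamma (α - (j : ℝ) / 2)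

/-- The matrix Fourier transform `(ℱf)(y) = ∫ exp(i tr(y′x)) f(x) dx`. -/
noncomputable def matFourier (n m : ℕ) (f : Matrix (Fin n) (Fin m) ℝ → ℂ)
    (y : Matrix (Fin n) (Fin m) ℝ) : ℂ :=
  ∫ x : Matrix (Fin n) (Fin m) ℝ, Complex.exp (Complex.I * ((Matrix.trace (yᵀ * x) : ℝ) : ℂ)) * f x

instance matSigmaFinite (p q : ℕ) : SigmaFinite (volume : Measure (Matrix (Fin p) (Fin q) ℝ)) :=
  (inferInstance : SigmaFinite (volume : Measure (Fin p → Fin q → ℝ)))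

instance matSFinite (p q : ℕ) : SFinite (volume : Measure (Matrix (Fin p) (Fin q) ℝ)) :=
  (inferInstance : SFinite (volume : Measure (Fin p → Fin q → ℝ)))

instance matBorel (p q : ℕ) : BorelSpace (Matrix (Fin p) (Fin q) ℝ) :=
  (inferInstance : BorelSpace (Fin p → Fin q → ℝ))

instance matSecondCountable (p q : ℕ) : SecondCountableTopology (Matrix (Fin p) (Fin q) ℝ) :=
  (inferInstance : SecondCountableTopology (Fin p → Fin q → ℝ))

section Aux

variable {n k m : ℕ}

lemma blockRows_inl (hn : k + (n - k) = n) (ω : Matrix (Fin k) (Fin m) ℝ)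
    (t : Matrix (Fin (n - k)) (Fin m) ℝ) (a : Fin k) (j : Fin m) :
    blockRows ω t (finCongr hn (finSumFinEquiv (Sum.inl a))) j = ω a j := by
  have hv : (((finCongr hn (finSumFinEquiv (Sum.inl a))) : Fin n) : ℕ) = (a : ℕ) := by simp
  have h2 : (((finCongr hn (finSumFinEquiv (Sum.inl a))) : Fin n) : ℕ) < k := by
    rw [hv]; exact a.isLt
  simp only [blockRows]
  rw [dif_pos h2]
  exact congrFun (congrArg ω (Fin.ext hv)) j

lemma blockRows_inr (hn : k + (n - k) = n) (ω : Matrix (Fin k) (Fin m) ℝ)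
    (t : Matrix (Fin (n - k)) (Fin m) ℝ) (a : Fin (n - k)) (j : Fin m) :
    blockRows ω t (finCongr hn (finSumFinEquiv (Sum.inr a))) j = t a j := by
  have hv : (((finCongr hn (finSumFinEquiv (Sum.inr a))) : Fin n) : ℕ) = k + (a : ℕ) := by simp
  have h2 : ¬ (((finCongr hn (finSumFinEquiv (Sum.inr a))) : Fin n) : ℕ) < k := by
    rw [hv]; omega
  simp only [blockRows]
  rw [dif_neg h2]
  have hval : (((finCongr hn (finSumFinEquiv (Sum.inr a))) : Fin n) : ℕ) - k = (a : ℕ) := by omega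
  exact congrFun (congrArg t (Fin.ext hval)) j

lemma measurePreserving_blockRows (n k m : ℕ) (hkn : k ≤ n) :
    MeasurePreserving
      (fun p : Matrix (Fin k) (Fin m) ℝ × Matrix (Fin (n - k)) (Fin m) ℝ =>
        blockRows p.1 p.2) volume volume := by
  have hn : k + (n - k) = n := by omega
  set e : Fin k ⊕ Fin (n - k) ≃ Fin n := finSumFinEquiv.trans (finCongr hn) with he
  have h1 := volume_measurePreserving_sumPiEquivProdPi_symm
      (fun _ : Fin k ⊕ Fin (n - k) => (Fin m → ℝ))
  have h2 := volume_measurePreserving_piCongrLeft (fun _ : Fin n => (Fin m → ℝ)) e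
  have heq : (fun p : Matrix (Fin k) (Fin m) ℝ × Matrix (Fin (n - k)) (Fin m) ℝ =>
      blockRows p.1 p.2) =
      (MeasurableEquiv.piCongrLeft (fun _ : Fin n => (Fin m → ℝ)) e) ∘
        (MeasurableEquiv.sumPiEquivProdPi (fun _ : Fin k ⊕ Fin (n - k) => (Fin m → ℝ))).symm := by
    funext p
    funext i j
    obtain ⟨s, rfl⟩ : ∃ s, e s = i := ⟨e.symm i, e.apply_symm_apply i⟩
    have hL : ((MeasurableEquiv.piCongrLeft (fun _ : Fin n => (Fin m → ℝ)) e)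
        ((MeasurableEquiv.sumPiEquivProdPi (fun _ : Fin k ⊕ Fin (n - k) => (Fin m → ℝ))).symm p))
          (e s)
        = ((MeasurableEquiv.sumPiEquivProdPi
            (fun _ : Fin k ⊕ Fin (n - k) => (Fin m → ℝ))).symm p) s := by
      rw [MeasurableEquiv.coe_piCongrLeft]
      exact Equiv.piCongrLeft_apply_apply _ e _ s
    show blockRows p.1 p.2 (e s) j = (MeasurableEquiv.piCongrLeft (fun _ : Fin n => (Fin m → ℝ)) e)
      ((MeasurableEquiv.sumPiEquivProdPi (fun _ : Fin k ⊕ Fin (n - k) => (Fin m → ℝ))).symm p) (e s) j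
    cases s with
    | inl a =>
      rw [show e (Sum.inl a) = finCongr hn (finSumFinEquiv (Sum.inl a)) from rfl]
      rw [blockRows_inl hn]
      rw [show (finCongr hn (finSumFinEquiv (Sum.inl a))) = e (Sum.inl a) from rfl, hL]
      rfl
    | inr a =>
      rw [show e (Sum.inr a) = finCongr hn (finSumFinEquiv (Sum.inr a)) from rfl]
      rw [blockRows_inr hn]
      rw [show (finCongr hn (finSumFinEquiv (Sum.inr a))) = e (Sum.inr a) from rfl, hL]
      rfl
  rw [heq]
  exact h2.comp h1

/-- Left multiplication by a fixed `n × n` matrix, as a linear map on `n × m` matrices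
(viewed as the pi type). -/
noncomputable def mulLeftLM (n m : ℕ) (A : Matrix (Fin n) (Fin n) ℝ) :
    (Fin n → Fin m → ℝ) →ₗ[ℝ] (Fin n → Fin m → ℝ) where
  toFun x := (A * (Matrix.of x) : Matrix (Fin n) (Fin m) ℝ)
  map_add' x y := Matrix.mul_add A (Matrix.of x) (Matrix.of y)
  map_smul' c x := Matrix.mul_smul A c (Matrix.of x)

open scoped Kronecker in
lemma det_mulLeftLM (n m : ℕ) (A : Matrix (Fin n) (Fin n) ℝ) :
    LinearMap.det (mulLeftLM n m A) = A.det ^ m := by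
  classical
  let b : Module.Basis ((_ : Fin n) × Fin m) ℝ (Fin n → Fin m → ℝ) :=
    Pi.basis fun _ : Fin n => Pi.basisFun ℝ (Fin m)
  rw [← LinearMap.det_toMatrix b]
  have hmat : LinearMap.toMatrix b b (mulLeftLM n m A) =
      ((A ⊗ₖ (1 : Matrix (Fin m) (Fin m) ℝ)).reindex
        (Equiv.sigmaEquivProd (Fin n) (Fin m)).symm
        (Equiv.sigmaEquivProd (Fin n) (Fin m)).symm) := by
    ext ⟨i, j⟩ ⟨l, j'⟩
    rw [LinearMap.toMatrix_apply]
    simp only [b, Pi.basis_repr, Pi.basisFun_repr, Pi.basis_apply, Matrix.reindex_apply,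
      Equiv.symm_symm, Matrix.submatrix_apply, Equiv.sigmaEquivProd_apply,
      Matrix.kroneckerMap_apply]
    show (A * Matrix.of (Pi.single l ((Pi.basisFun ℝ (Fin m)) j'))) i j = _
    rw [Matrix.mul_apply]
    rw [Finset.sum_eq_single l]
    · simp [Pi.basisFun_apply, Matrix.one_apply, Pi.single_apply, eq_comm]
    · intro u _ hu
      simp [Pi.single_apply, hu]
    · simp
  rw [hmat, Matrix.det_reindex_self, Matrix.det_kronecker]
  simp

lemma measurePreserving_mulLeft (n m : ℕ) (γ : Matrix (Fin n) (Fin n) ℝ)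
    (hγ : γ ∈ Matrix.orthogonalGroup (Fin n) ℝ) :
    MeasurePreserving (fun x : Matrix (Fin n) (Fin m) ℝ => γ * x) volume volume := by
  have hdet2 : γ.det * γ.det = 1 := by
    have h := (Matrix.mem_orthogonalGroup_iff (Fin n) ℝ).mp hγ
    have h2 := congrArg Matrix.det h
    rwa [Matrix.det_mul, Matrix.det_transpose,
      Matrix.det_one] at h2
  have habs : |γ.det| = 1 := by
    nlinarith [abs_nonneg γ.det, abs_mul_abs_self γ.det]
  have hdne : γ.det ≠ 0 := by
    intro h; rw [h] at habs; simp at habs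
  have hLdet : LinearMap.det (mulLeftLM n m γ) = γ.det ^ m := det_mulLeftLM n m γ
  have hne : LinearMap.det (mulLeftLM n m γ) ≠ 0 := by
    rw [hLdet]; exact pow_ne_zero _ hdne
  constructor
  · exact (mulLeftLM n m γ).continuous_of_finiteDimensional.measurable
  · have hmap := Measure.map_linearMap_addHaar_eq_smul_addHaar
      (volume : Measure (Fin n → Fin m → ℝ)) hne
    rw [hLdet] at hmap
    have habs' : |(γ.det ^ m)⁻¹| = 1 := by
      rw [abs_inv, abs_pow, habs, one_pow, inv_one]
    rw [habs'] at hmap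
    simp at hmap
    exact hmap

lemma continuous_traceTransposeMul (p q : ℕ) (Y : Matrix (Fin p) (Fin q) ℝ) :
    Continuous fun x : Matrix (Fin p) (Fin q) ℝ => Matrix.trace (Yᵀ * x) := by
  have h : (fun x : Matrix (Fin p) (Fin q) ℝ => Matrix.trace (Yᵀ * x)) =
      fun x => ∑ j : Fin q, ∑ i : Fin p, Y i j * x i j := by
    funext x
    simp [Matrix.trace, Matrix.diag, Matrix.mul_apply, Matrix.transpose_apply]
  rw [h]
  exact continuous_finset_sum _ fun j _ =>
    continuous_finset_sum _ fun i _ =>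
      continuous_const.mul ((continuous_apply j).comp (continuous_apply i))

lemma norm_exp_I_mul_ofReal (r : ℝ) : ‖Complex.exp (Complex.I * (r : ℂ))‖ = 1 := by
  rw [Complex.norm_exp]
  simp

lemma trace_blockRows_zero (n k m : ℕ) (hkn : k ≤ n)
    (b t : Matrix (Fin (n - k)) (Fin m) ℝ) (ω : Matrix (Fin k) (Fin m) ℝ) :
    Matrix.trace ((blockRows (0 : Matrix (Fin k) (Fin m) ℝ) b)ᵀ * blockRows ω t)
      = Matrix.trace (bᵀ * t) := by
  have hn : k + (n - k) = n := by omega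
  set e : Fin k ⊕ Fin (n - k) ≃ Fin n := finSumFinEquiv.trans (finCongr hn) with he
  simp only [Matrix.trace, Matrix.diag, Matrix.mul_apply, Matrix.transpose_apply]
  refine Finset.sum_congr rfl fun j _ => ?_
  rw [← Fintype.sum_equiv e
    (fun s => blockRows (0 : Matrix (Fin k) (Fin m) ℝ) b (e s) j * blockRows ω t (e s) j)
    (fun i => blockRows (0 : Matrix (Fin k) (Fin m) ℝ) b i j * blockRows ω t i j)
    (fun s => rfl)]
  rw [Fintype.sum_sum_type]
  have h0 : ∀ a : Fin k,
      blockRows (0 : Matrix (Fin k) (Fin m) ℝ) b (e (Sum.inl a)) j * blockRows ω t (e (Sum.inl a)) j = 0 := by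
    intro a
    rw [show e (Sum.inl a) = finCongr hn (finSumFinEquiv (Sum.inl a)) from rfl,
      blockRows_inl hn]
    simp
  rw [Finset.sum_congr rfl fun a _ => h0 a, Finset.sum_const_zero, zero_add]
  refine Finset.sum_congr rfl fun a _ => ?_
  rw [show e (Sum.inr a) = finCongr hn (finSumFinEquiv (Sum.inr a)) from rfl,
    blockRows_inr hn, blockRows_inr hn]

end Aux

/-- Projection–slice theorem for the matrix Radon transform. -/
theorem projection_slice (n m k : ℕ) (hm : 1 ≤ m) (hk : 1 ≤ k) (hkn : k ≤ n - m)
    (f : Matrix (Fin n) (Fin m) ℝ → ℂ) (hf : Integrable f)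
    (γ : Matrix (Fin n) (Fin n) ℝ) (hγ : γ ∈ Matrix.orthogonalGroup (Fin n) ℝ) :
    (∀ᵐ t : Matrix (Fin (n - k)) (Fin m) ℝ,
      Integrable (fun ω : Matrix (Fin k) (Fin m) ℝ => f (γ * blockRows ω t))) ∧
    Integrable (fun t : Matrix (Fin (n - k)) (Fin m) ℝ =>
      ∫ ω : Matrix (Fin k) (Fin m) ℝ, f (γ * blockRows ω t)) ∧
    ∀ b : Matrix (Fin (n - k)) (Fin m) ℝ,
      (∫ t : Matrix (Fin (n - k)) (Fin m) ℝ,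
          Complex.exp (Complex.I * ((Matrix.trace (bᵀ * t) : ℝ) : ℂ)) *
            ∫ ω : Matrix (Fin k) (Fin m) ℝ, f (γ * blockRows ω t))
        = matFourier n m f (γ * blockRows (0 : Matrix (Fin k) (Fin m) ℝ) b) := by
  have hkn' : k ≤ n := le_trans hkn (Nat.sub_le n m)
  have hγT : γᵀ * γ = 1 := by
    have h := (Matrix.mem_orthogonalGroup_iff' (Fin n) ℝ).mp hγ
    have hstar : star γ = γᵀ := by
      ext i j; simp [Matrix.star_apply]
    exact h
  have hB := measurePreserving_blockRows n k m hkn'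
  have hL := measurePreserving_mulLeft n m γ hγ
  have hΦ : MeasurePreserving
      (fun p : Matrix (Fin k) (Fin m) ℝ × Matrix (Fin (n - k)) (Fin m) ℝ =>
        γ * blockRows p.1 p.2) volume volume := hL.comp hB
  have hcomp : Integrable
      (fun p : Matrix (Fin k) (Fin m) ℝ × Matrix (Fin (n - k)) (Fin m) ℝ =>
        f (γ * blockRows p.1 p.2)) volume :=
    (hΦ.integrable_comp hf.1).mpr hf
  rw [Measure.volume_eq_prod] at hcomp
  refine ⟨hcomp.prod_left_ae, hcomp.integral_prod_right, ?_⟩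
  intro b
  set Y : Matrix (Fin n) (Fin m) ℝ := γ * blockRows (0 : Matrix (Fin k) (Fin m) ℝ) b with hY
  have htr : ∀ (ω : Matrix (Fin k) (Fin m) ℝ) (t : Matrix (Fin (n - k)) (Fin m) ℝ),
      Matrix.trace (bᵀ * t) = Matrix.trace (Yᵀ * (γ * blockRows ω t)) := by
    intro ω t
    have h1 : Yᵀ * (γ * blockRows ω t)
        = (blockRows (0 : Matrix (Fin k) (Fin m) ℝ) b)ᵀ * blockRows ω t := by
      rw [hY, Matrix.transpose_mul, Matrix.mul_assoc, ← Matrix.mul_assoc γᵀ, hγT,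
        Matrix.one_mul]
    rw [h1, trace_blockRows_zero n k m hkn']
  have hcY : Continuous fun x : Matrix (Fin n) (Fin m) ℝ =>
      Complex.exp (Complex.I * ((Matrix.trace (Yᵀ * x) : ℝ) : ℂ)) :=
    Complex.continuous_exp.comp (continuous_const.mul
      (Complex.continuous_ofReal.comp (continuous_traceTransposeMul n m Y)))
  have hcb : Continuous fun p : Matrix (Fin k) (Fin m) ℝ × Matrix (Fin (n - k)) (Fin m) ℝ =>
      Complex.exp (Complex.I * ((Matrix.trace (bᵀ * p.2) : ℝ) : ℂ)) := by
    have h2 : Continuous fun p : Matrix (Fin k) (Fin m) ℝ × Matrix (Fin (n - k)) (Fin m) ℝ =>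
        Matrix.trace (bᵀ * p.2) := (continuous_traceTransposeMul (n - k) m b).comp continuous_snd
    exact Complex.continuous_exp.comp (continuous_const.mul
      (Complex.continuous_ofReal.comp h2))
  have hint2 : Integrable
      (fun p : Matrix (Fin k) (Fin m) ℝ × Matrix (Fin (n - k)) (Fin m) ℝ =>
        Complex.exp (Complex.I * ((Matrix.trace (bᵀ * p.2) : ℝ) : ℂ)) *
          f (γ * blockRows p.1 p.2)) (volume.prod volume) := by
    refine Integrable.bdd_mul hcomp hcb.aestronglyMeasurable (c := 1) (Filter.Eventually.of_forall fun p => ?_)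
    rw [norm_exp_I_mul_ofReal]
  have hG : AEStronglyMeasurable
      (fun x : Matrix (Fin n) (Fin m) ℝ =>
        Complex.exp (Complex.I * ((Matrix.trace (Yᵀ * x) : ℝ) : ℂ)) * f x) volume :=
    hcY.aestronglyMeasurable.mul hf.1
  have e1 : ∀ t : Matrix (Fin (n - k)) (Fin m) ℝ,
      Complex.exp (Complex.I * ((Matrix.trace (bᵀ * t) : ℝ) : ℂ)) *
          ∫ ω : Matrix (Fin k) (Fin m) ℝ, f (γ * blockRows ω t)
        = ∫ ω : Matrix (Fin k) (Fin m) ℝ,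
            Complex.exp (Complex.I * ((Matrix.trace (bᵀ * t) : ℝ) : ℂ)) *
              f (γ * blockRows ω t) :=
    fun t => (integral_const_mul _ _).symm
  calc
    (∫ t : Matrix (Fin (n - k)) (Fin m) ℝ,
        Complex.exp (Complex.I * ((Matrix.trace (bᵀ * t) : ℝ) : ℂ)) *
          ∫ ω : Matrix (Fin k) (Fin m) ℝ, f (γ * blockRows ω t))
      = ∫ t : Matrix (Fin (n - k)) (Fin m) ℝ, ∫ ω : Matrix (Fin k) (Fin m) ℝ,
          Complex.exp (Complex.I * ((Matrix.trace (bᵀ * t) : ℝ) : ℂ)) *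
            f (γ * blockRows ω t) := by
        simp only [e1]
    _ = ∫ p : Matrix (Fin k) (Fin m) ℝ × Matrix (Fin (n - k)) (Fin m) ℝ,
          Complex.exp (Complex.I * ((Matrix.trace (bᵀ * p.2) : ℝ) : ℂ)) *
            f (γ * blockRows p.1 p.2) ∂(volume.prod volume) :=
        (integral_prod_symm _ hint2).symm
    _ = ∫ p : Matrix (Fin k) (Fin m) ℝ × Matrix (Fin (n - k)) (Fin m) ℝ,
          Complex.exp (Complex.I * ((Matrix.trace (Yᵀ * (γ * blockRows p.1 p.2)) : ℝ) : ℂ)) *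
            f (γ * blockRows p.1 p.2) ∂(volume.prod volume) := by
        congr 1
        funext p
        rw [htr p.1 p.2]
    _ = ∫ x : Matrix (Fin n) (Fin m) ℝ,
          Complex.exp (Complex.I * ((Matrix.trace (Yᵀ * x) : ℝ) : ℂ)) * f x := by
        rw [← Measure.volume_eq_prod]
        rw [← hΦ.map_eq]
        exact (integral_map hΦ.aemeasurable (by rwa [hΦ.map_eq])).symm
    _ = matFourier n m f Y := rfl
end

section
/- Existence of the Radon transform for continuous decaying functions: Let m ≥ 1, 1 ≤ k ≤ n−1, and let f be a continuous function on M_{n,m} for which there exist a constant C ≥ 0 and a real number a > k+m−1 such that |f(x)| ≤ C·det(I_m + x′x)^{−a/2} for all x ∈ M_{n,m}. Then for every γ ∈ O(n) and every t ∈ M_{n−k,m}, the function ω ↦ f(γ·[ω;t]) is Lebesgue integrable on M_{k,m}; that is, the Radon transform (Rf)(γ,t) is finite for every matrix k-plane. -/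
open MeasureTheory Matrix
open scoped ENNReal

/-! ### Auxiliary lemmas -/

lemma rpow_neg_le_aux {x y c : ℝ} (hx : 0 < x) (hxy : x ≤ y) (hc : 0 ≤ c) :
    y ^ (-c) ≤ x ^ (-c) := by
  rw [Real.rpow_neg hx.le, Real.rpow_neg (hx.trans_le hxy).le]
  gcongr

lemma dotP_nonneg {m : ℕ} (u : Fin m → ℝ) : 0 ≤ u ⬝ᵥ u :=
  Finset.sum_nonneg fun _ _ => mul_self_nonneg _

/-- determinant lemma specialization -/
lemma det_rank_one_update {m : ℕ} {B : Matrix (Fin m) (Fin m) ℝ} (hB : B.PosDef)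
    (v : Fin m → ℝ) :
    (B + replicateCol Unit v * replicateRow Unit v).det = B.det * (1 + v ⬝ᵥ B⁻¹ *ᵥ v) := by
  rw [Matrix.det_add_replicateCol_mul_replicateRow (isUnit_iff_ne_zero.2 hB.det_pos.ne') v v]
  congr 1
  rw [det_unique]
  simp only [Matrix.add_apply, Matrix.one_apply_eq]
  congr 1
  rw [Matrix.mul_assoc]
  rw [show (B⁻¹ * replicateCol Unit v) = replicateCol Unit (B⁻¹ *ᵥ v) by
    ext i j; simp [Matrix.mul_apply, Matrix.replicateCol_apply, Matrix.mulVec, dotProduct]]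
  rw [Matrix.replicateRow_mul_replicateCol_apply]

open scoped MatrixOrder in
noncomputable def Matrix.PosSemidef.sqrt {m : ℕ} {B : Matrix (Fin m) (Fin m) ℝ}
    (_hB : B.PosSemidef) : Matrix (Fin m) (Fin m) ℝ := CFC.sqrt B

open scoped MatrixOrder in
lemma Matrix.PosSemidef.sqrt_mul_self {m : ℕ} {B : Matrix (Fin m) (Fin m) ℝ}
    (hB : B.PosSemidef) : hB.sqrt * hB.sqrt = B :=
  CFC.sqrt_mul_sqrt_self B hB.nonneg

open scoped MatrixOrder in
lemma Matrix.PosSemidef.posSemidef_sqrt {m : ℕ} {B : Matrix (Fin m) (Fin m) ℝ}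
    (hB : B.PosSemidef) : hB.sqrt.PosSemidef :=
  Matrix.nonneg_iff_posSemidef.mp (CFC.sqrt_nonneg B)

section sqrtstuff
variable {m : ℕ} {B : Matrix (Fin m) (Fin m) ℝ}

lemma sqrt_quad (hB : B.PosDef) (u : Fin m → ℝ) :
    (hB.posSemidef.sqrt *ᵥ u) ⬝ᵥ B⁻¹ *ᵥ (hB.posSemidef.sqrt *ᵥ u) = u ⬝ᵥ u := by
  set S := hB.posSemidef.sqrt with hSdef
  have hSS : S * S = B := hB.posSemidef.sqrt_mul_self
  have hdetS : IsUnit S.det := isUnit_iff_ne_zero.2 <| by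
    intro h
    have : B.det = 0 := by rw [← hSS, Matrix.det_mul, h, zero_mul]
    exact hB.det_pos.ne' this
  have hSinv : S * (B⁻¹ * S) = 1 := by
    rw [← hSS, Matrix.mul_inv_rev, Matrix.mul_assoc S⁻¹ S⁻¹ S,
      Matrix.nonsing_inv_mul S hdetS, Matrix.mul_one, Matrix.mul_nonsing_inv S hdetS]
  have hsymm : Sᵀ = S := by
    have h := hB.posSemidef.posSemidef_sqrt.isHermitian
    rwa [Matrix.IsHermitian, conjTranspose_eq_transpose_of_trivial] at h
  calc (S *ᵥ u) ⬝ᵥ B⁻¹ *ᵥ (S *ᵥ u)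
      = (u ᵥ* S) ⬝ᵥ (B⁻¹ * S) *ᵥ u := by
        conv_lhs => rw [Matrix.mulVec_mulVec, ← hsymm, Matrix.mulVec_transpose, hsymm]
    _ = (u ᵥ* S) ᵥ* (B⁻¹ * S) ⬝ᵥ u := by rw [Matrix.dotProduct_mulVec]
    _ = (u ᵥ* (S * (B⁻¹ * S))) ⬝ᵥ u := by rw [Matrix.vecMul_vecMul]
    _ = u ⬝ᵥ u := by rw [hSinv, Matrix.vecMul_one]

lemma absdet_sqrt (hB : B.PosDef) : |hB.posSemidef.sqrt.det| = B.det ^ ((1:ℝ)/2) := by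
  have hSS : hB.posSemidef.sqrt * hB.posSemidef.sqrt = B := hB.posSemidef.sqrt_mul_self
  have h2 : |hB.posSemidef.sqrt.det| ^ 2 = B.det := by
    rw [sq_abs, sq, ← Matrix.det_mul, hSS]
  rw [← Real.sqrt_eq_rpow, ← h2, Real.sqrt_sq (abs_nonneg _)]

end sqrtstuff

lemma norm_sq_le_dotP {m : ℕ} (u : Fin m → ℝ) : ‖u‖^2 ≤ u ⬝ᵥ u := by
  have h : ‖u‖ ≤ Real.sqrt (u ⬝ᵥ u) := by
    rw [pi_norm_le_iff_of_nonneg (Real.sqrt_nonneg _)]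
    intro i
    rw [Real.norm_eq_abs, ← Real.sqrt_sq_eq_abs, sq]
    exact Real.sqrt_le_sqrt
      (Finset.single_le_sum (f := fun j => u j * u j) (fun _ _ => mul_self_nonneg _)
        (Finset.mem_univ i))
  calc ‖u‖^2 ≤ Real.sqrt (u ⬝ᵥ u) ^ 2 := by gcongr
    _ = u ⬝ᵥ u := Real.sq_sqrt (dotP_nonneg u)

lemma integrable_base {m : ℕ} {a : ℝ} (ham : (m : ℝ) < a) :
    Integrable (fun u : Fin m → ℝ => (1 + u ⬝ᵥ u) ^ (-(a/2))) := by
  have hnr : (Module.finrank ℝ (Fin m → ℝ) : ℝ) < a := by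
    simpa [Module.finrank_pi] using ham
  refine (integrable_rpow_neg_one_add_norm_sq (μ := (volume : Measure (Fin m → ℝ))) hnr).mono'
    ?_ (Filter.Eventually.of_forall fun u => ?_)
  · apply Continuous.aestronglyMeasurable
    apply Continuous.rpow_const
    · have : Continuous fun u : Fin m → ℝ => u ⬝ᵥ u := by
        simp only [dotProduct]
        fun_prop
      fun_prop
    · intro u
      left
      have := dotP_nonneg u
      positivity
  · have h1 : (0:ℝ) < 1 + ‖u‖^2 := by positivity
    rw [Real.norm_eq_abs, abs_of_nonneg (Real.rpow_nonneg (by have := dotP_nonneg u; positivity) _)]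
    rw [show (-a/2) = -(a/2) by ring]
    exact rpow_neg_le_aux h1 (by linarith [norm_sq_le_dotP u])
      (by have : (0:ℝ) ≤ m := Nat.cast_nonneg m; linarith)

section keym
variable {m : ℕ} {B : Matrix (Fin m) (Fin m) ℝ}

lemma cont_quad (B : Matrix (Fin m) (Fin m) ℝ) :
    Continuous fun v : Fin m → ℝ => 1 + v ⬝ᵥ B *ᵥ v := by
  simp only [dotProduct, Matrix.mulVec]
  fun_prop

lemma quad_nonneg (hB : B.PosDef) (v : Fin m → ℝ) : 0 ≤ v ⬝ᵥ B⁻¹ *ᵥ v := by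
  have h := hB.inv.posSemidef.dotProduct_mulVec_nonneg v
  simpa using h

/-- integrability and value of `∫ (1 + v ⬝ᵥ B⁻¹ v)^(-(a/2)) dv`. -/
lemma key_g (hB : B.PosDef) {a : ℝ} (ham : (m : ℝ) < a) :
    Integrable (fun v : Fin m → ℝ => (1 + v ⬝ᵥ B⁻¹ *ᵥ v) ^ (-(a/2))) ∧
    ∫ v : Fin m → ℝ, (1 + v ⬝ᵥ B⁻¹ *ᵥ v) ^ (-(a/2))
      = B.det ^ ((1:ℝ)/2) * ∫ u : Fin m → ℝ, (1 + u ⬝ᵥ u) ^ (-(a/2)) := by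
  classical
  set S := hB.posSemidef.sqrt with hSdef
  have hSS : S * S = B := hB.posSemidef.sqrt_mul_self
  have hdetS : S.det ≠ 0 := by
    intro h
    exact hB.det_pos.ne' (by rw [← hSS, Matrix.det_mul, h, zero_mul])
  set g : (Fin m → ℝ) → ℝ := fun v => (1 + v ⬝ᵥ B⁻¹ *ᵥ v) ^ (-(a/2)) with hgdef
  have hgc : Continuous g := by
    apply (cont_quad B⁻¹).rpow_const
    intro v; left
    have := quad_nonneg hB v
    positivity
  have hcomp : ∀ u, g (Matrix.toLin' S u) = (1 + u ⬝ᵥ u) ^ (-(a/2)) := by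
    intro u
    rw [hgdef]
    simp only [Matrix.toLin'_apply]
    rw [sqrt_quad hB u]
  have hmap : Measure.map (Matrix.toLin' S) volume
      = ENNReal.ofReal |S.det⁻¹| • volume :=
    Real.map_matrix_volume_pi_eq_smul_volume_pi hdetS
  have hc0 : ENNReal.ofReal |S.det⁻¹| ≠ 0 := by
    simpa [ENNReal.ofReal_eq_zero, not_le] using abs_pos.2 (inv_ne_zero hdetS)
  have hc1 : ENNReal.ofReal |S.det⁻¹| ≠ ⊤ := ENNReal.ofReal_ne_top
  have hSmeas : AEMeasurable (Matrix.toLin' S) (volume : Measure (Fin m → ℝ)) := by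
    apply Continuous.aemeasurable
    show Continuous fun u => Matrix.toLin' S u
    simp only [Matrix.toLin'_apply]
    exact continuous_const.matrix_mulVec continuous_id
  have hint_comp : Integrable (g ∘ Matrix.toLin' S) volume := by
    have := integrable_base ham
    refine this.congr (Filter.Eventually.of_forall fun u => ?_)
    exact (hcomp u).symm
  have hint_map : Integrable g (Measure.map (Matrix.toLin' S) volume) := by
    rw [integrable_map_measure hgc.aestronglyMeasurable hSmeas]
    exact hint_comp
  constructor
  · rw [hmap] at hint_map
    exact (integrable_smul_measure hc0 hc1).1 hint_map
  · have h1 : ∫ u, g (Matrix.toLin' S u) = ∫ x, g x ∂(Measure.map (Matrix.toLin' S) volume) :=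
      (integral_map hSmeas hgc.aestronglyMeasurable).symm
    have h2 : ∫ x, g x ∂(Measure.map (Matrix.toLin' S) volume) = |S.det⁻¹| * ∫ x, g x := by
      rw [hmap, integral_smul_measure, ENNReal.toReal_ofReal (abs_nonneg _), smul_eq_mul]
    have h3 : ∫ u, g (Matrix.toLin' S u) = ∫ u : Fin m → ℝ, (1 + u ⬝ᵥ u) ^ (-(a/2)) :=
      integral_congr_ae (Filter.Eventually.of_forall hcomp)
    have habs : |S.det| = B.det ^ ((1:ℝ)/2) := absdet_sqrt hB
    have : ∫ x, g x = |S.det| * ∫ u : Fin m → ℝ, (1 + u ⬝ᵥ u) ^ (-(a/2)) := by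
      rw [← h3, h1, h2, abs_inv]
      field_simp
    rw [hgdef] at this
    rw [this, habs]

lemma key_m (hB : B.PosDef) {a : ℝ} (ham : (m : ℝ) < a) :
    Integrable (fun v : Fin m → ℝ => (B + replicateCol Unit v * replicateRow Unit v).det ^ (-(a/2))) ∧
    ∫ v : Fin m → ℝ, (B + replicateCol Unit v * replicateRow Unit v).det ^ (-(a/2))
      = B.det ^ ((1-a)/2) * ∫ u : Fin m → ℝ, (1 + u ⬝ᵥ u) ^ (-(a/2)) := by
  have hdet : 0 < B.det := hB.det_pos
  have hptwise : ∀ v : Fin m → ℝ, (B + replicateCol Unit v * replicateRow Unit v).det ^ (-(a/2))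
      = B.det ^ (-(a/2)) * (1 + v ⬝ᵥ B⁻¹ *ᵥ v) ^ (-(a/2)) := by
    intro v
    rw [det_rank_one_update hB v, Real.mul_rpow hdet.le (by have := quad_nonneg hB v; positivity)]
  obtain ⟨hint, hval⟩ := key_g hB ham
  constructor
  · refine (hint.const_mul (B.det ^ (-(a/2)))).congr
      (Filter.Eventually.of_forall fun v => (hptwise v).symm)
  · calc ∫ v : Fin m → ℝ, (B + replicateCol Unit v * replicateRow Unit v).det ^ (-(a/2))
        = ∫ v : Fin m → ℝ, B.det ^ (-(a/2)) * (1 + v ⬝ᵥ B⁻¹ *ᵥ v) ^ (-(a/2)) :=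
          integral_congr_ae (Filter.Eventually.of_forall hptwise)
      _ = B.det ^ (-(a/2)) * ∫ v : Fin m → ℝ, (1 + v ⬝ᵥ B⁻¹ *ᵥ v) ^ (-(a/2)) :=
          integral_const_mul _ _
      _ = B.det ^ ((1-a)/2) * ∫ u : Fin m → ℝ, (1 + u ⬝ᵥ u) ^ (-(a/2)) := by
          rw [hval, ← mul_assoc, ← Real.rpow_add hdet, show -(a/2) + 1/2 = (1-a)/2 by ring]

end keym

section lemA
variable {m : ℕ}

lemma posSemidef_gram {k : ℕ} (ω : Matrix (Fin k) (Fin m) ℝ) : (ωᵀ * ω).PosSemidef := by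
  have h := Matrix.posSemidef_conjTranspose_mul_self ω
  rwa [conjTranspose_eq_transpose_of_trivial] at h

lemma gram_succ {k : ℕ} (ω : Fin (k+1) → Fin m → ℝ) :
    (Matrix.of ω)ᵀ * Matrix.of ω
      = ((Matrix.of fun j => ω (Fin.succ j))ᵀ * Matrix.of (fun j => ω (Fin.succ j))
          + replicateCol Unit (ω 0) * replicateRow Unit (ω 0)) := by
  ext p q
  simp only [Matrix.mul_apply, Matrix.transpose_apply, Matrix.add_apply, Matrix.replicateCol_apply,
    Matrix.replicateRow_apply, Matrix.of_apply, Fin.sum_univ_succ, Finset.univ_unique, Finset.sum_const,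
    Finset.card_singleton, one_smul]
  exact add_comm _ _

lemma lemA (m : ℕ) : ∀ (k : ℕ) (a : ℝ), (k : ℝ) + (m : ℝ) - 1 < a →
    ∀ B : Matrix (Fin m) (Fin m) ℝ, B.PosDef →
    Integrable (fun ω : Fin k → Fin m → ℝ =>
      (B + (Matrix.of ω)ᵀ * Matrix.of ω).det ^ (-(a/2))) := by
  intro k
  induction k with
  | zero =>
    intro a _ B _
    haveI : IsProbabilityMeasure (volume : Measure (Fin 0 → Fin m → ℝ)) := by
      constructor
      rw [MeasureTheory.volume_pi, MeasureTheory.Measure.pi_univ]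
      simp
    exact (integrable_const ((B + (Matrix.of (default : Fin 0 → Fin m → ℝ))ᵀ
        * Matrix.of (default : Fin 0 → Fin m → ℝ)).det ^ (-(a/2)))).congr
      (Filter.Eventually.of_forall fun ω => by rw [Subsingleton.elim (default) ω])
  | succ k ih =>
    intro a ha B hB
    have ham : (m : ℝ) < a := by
      have : (0:ℝ) ≤ (k:ℝ) := Nat.cast_nonneg k
      push_cast at ha
      linarith
    have ha' : (k : ℝ) + (m : ℝ) - 1 < a - 1 := by push_cast at ha; linarith
    set G : (Fin m → ℝ) × (Fin k → Fin m → ℝ) → ℝ := fun p =>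
      ((B + (Matrix.of p.2)ᵀ * Matrix.of p.2) + replicateCol Unit p.1 * replicateRow Unit p.1).det ^ (-(a/2))
      with hGdef
    have hpos : ∀ (ω₀ : Fin k → Fin m → ℝ), (B + (Matrix.of ω₀)ᵀ * Matrix.of ω₀).PosDef :=
      fun ω₀ => hB.add_posSemidef (posSemidef_gram (Matrix.of ω₀))
    have hpos2 : ∀ p : (Fin m → ℝ) × (Fin k → Fin m → ℝ),
        ((B + (Matrix.of p.2)ᵀ * Matrix.of p.2) + replicateCol Unit p.1 * replicateRow Unit p.1).PosDef := by
      intro p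
      refine (hpos p.2).add_posSemidef ?_
      have h := Matrix.posSemidef_conjTranspose_mul_self (replicateRow Unit p.1)
      rwa [conjTranspose_eq_transpose_of_trivial, show (replicateRow Unit p.1)ᵀ = replicateCol Unit p.1 from rfl]
        at h
    have hGcont : Continuous G := by
      apply Continuous.rpow_const
      · apply Continuous.matrix_det
        have h2 : Continuous fun p : (Fin m → ℝ) × (Fin k → Fin m → ℝ) =>
            (Matrix.of p.2 : Matrix (Fin k) (Fin m) ℝ) :=
          continuous_matrix fun i j =>
            (continuous_apply j).comp ((continuous_apply i).comp continuous_snd)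
        have hcol : Continuous fun p : (Fin m → ℝ) × (Fin k → Fin m → ℝ) =>
            replicateCol Unit p.1 := continuous_matrix fun i _ => (continuous_apply i).comp continuous_fst
        have hrow : Continuous fun p : (Fin m → ℝ) × (Fin k → Fin m → ℝ) =>
            replicateRow Unit p.1 := continuous_matrix fun _ j => (continuous_apply j).comp continuous_fst
        exact (continuous_const.add (h2.matrix_transpose.matrix_mul h2)).add
          (hcol.matrix_mul hrow)
      · intro p
        left
        exact (hpos2 p).det_pos.ne'
    have hGaesm : AEStronglyMeasurable G
        ((volume : Measure (Fin m → ℝ)).prod (volume : Measure (Fin k → Fin m → ℝ))) :=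
      hGcont.aestronglyMeasurable
    have hGint : Integrable G
        ((volume : Measure (Fin m → ℝ)).prod (volume : Measure (Fin k → Fin m → ℝ))) := by
      rw [MeasureTheory.integrable_prod_iff' hGaesm]
      constructor
      · refine Filter.Eventually.of_forall fun ω₀ => ?_
        exact (key_m (hpos ω₀) ham).1
      · have heq : ∀ ω₀ : Fin k → Fin m → ℝ,
            (∫ v : Fin m → ℝ, ‖G (v, ω₀)‖)
              = ((B + (Matrix.of ω₀)ᵀ * Matrix.of ω₀).det ^ (-((a-1)/2)))
                  * ∫ u : Fin m → ℝ, (1 + u ⬝ᵥ u) ^ (-(a/2)) := by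
          intro ω₀
          have h1 : ∀ v : Fin m → ℝ, ‖G (v, ω₀)‖ = G (v, ω₀) := fun v =>
            Real.norm_of_nonneg (Real.rpow_nonneg (hpos2 (v, ω₀)).det_pos.le _)
          rw [integral_congr_ae (Filter.Eventually.of_forall fun v => h1 v)]
          have := (key_m (hpos ω₀) ham).2
          rw [hGdef]
          simp only []
          rw [this, show (1-a)/2 = -((a-1)/2) by ring]
        refine Integrable.congr ?_ (Filter.Eventually.of_forall fun ω₀ => (heq ω₀).symm)
        exact (ih (a-1) ha' B hB).mul_const _
    have hmp := MeasureTheory.volume_preserving_piFinSuccAbove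
      (fun _ : Fin (k+1) => (Fin m → ℝ)) 0
    have hFG : (fun ω : Fin (k+1) → Fin m → ℝ =>
        (B + (Matrix.of ω)ᵀ * Matrix.of ω).det ^ (-(a/2)))
          = G ∘ (MeasurableEquiv.piFinSuccAbove (fun _ : Fin (k+1) => (Fin m → ℝ)) 0) := by
      funext ω
      simp only [Function.comp_apply, MeasurableEquiv.piFinSuccAbove_apply, hGdef]
      rw [gram_succ ω]
      rw [add_assoc]
      simp only [Fin.insertNthEquiv_symm_apply, Fin.removeNth]
      congr 1
    rw [hFG]
    exact (hmp.integrable_comp hGaesm).2 hGint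

end lemA

lemma blockRows_gram {n k m : ℕ} (hkn : k ≤ n) (ω : Matrix (Fin k) (Fin m) ℝ)
    (t : Matrix (Fin (n - k)) (Fin m) ℝ) :
    (blockRows ω t)ᵀ * blockRows ω t = ωᵀ * ω + tᵀ * t := by
  have hnk : k + (n - k) = n := by omega
  ext p q
  simp only [Matrix.mul_apply, Matrix.transpose_apply, Matrix.add_apply]
  rw [← Fintype.sum_equiv ((finSumFinEquiv (m := k) (n := n - k)).trans (finCongr hnk))
    (fun s => blockRows ω t (((finSumFinEquiv (m := k) (n := n - k)).trans (finCongr hnk)) s) p *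
      blockRows ω t (((finSumFinEquiv (m := k) (n := n - k)).trans (finCongr hnk)) s) q)
    (fun i => blockRows ω t i p * blockRows ω t i q) (fun s => rfl)]
  rw [Fintype.sum_sum_type]
  congr 1
  · apply Finset.sum_congr rfl
    intro j _
    have hcoe : ((((finSumFinEquiv (m := k) (n := n - k)).trans (finCongr hnk)) (Sum.inl j)) : ℕ)
        = (j : ℕ) := by simp
    have h1 : blockRows ω t (((finSumFinEquiv (m := k) (n := n - k)).trans (finCongr hnk))
        (Sum.inl j)) p = ω j p := by
      unfold blockRows
      rw [dif_pos (by rw [hcoe]; exact j.isLt)]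
      exact congrFun (congrArg ω (Fin.ext hcoe)) p
    have h2 : blockRows ω t (((finSumFinEquiv (m := k) (n := n - k)).trans (finCongr hnk))
        (Sum.inl j)) q = ω j q := by
      unfold blockRows
      rw [dif_pos (by rw [hcoe]; exact j.isLt)]
      exact congrFun (congrArg ω (Fin.ext hcoe)) q
    rw [h1, h2]
  · apply Finset.sum_congr rfl
    intro j _
    have hcoe : ((((finSumFinEquiv (m := k) (n := n - k)).trans (finCongr hnk)) (Sum.inr j)) : ℕ)
        = k + (j : ℕ) := by simp
    have hnot : ¬ ((((finSumFinEquiv (m := k) (n := n - k)).trans (finCongr hnk)) (Sum.inr j)) : ℕ)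
        < k := by omega
    have h1 : ∀ r, blockRows ω t (((finSumFinEquiv (m := k) (n := n - k)).trans (finCongr hnk))
        (Sum.inr j)) r = t j r := by
      intro r
      unfold blockRows
      rw [dif_neg hnot]
      exact congrFun (congrArg t (Fin.ext
        (show ↑((finSumFinEquiv.trans (finCongr hnk)) (Sum.inr j)) - k = (j:ℕ) by omega))) r
    rw [h1, h1]

/-- Existence of the Radon transform for continuous functions with decay
`|f(x)| ≤ C · det(I_m + x′x)^{-a/2}`, `a > k + m - 1`. -/
theorem radon_exists_continuous (n m k : ℕ) (hm : 1 ≤ m) (hk : 1 ≤ k) (hkn : k ≤ n - 1)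
    (f : Matrix (Fin n) (Fin m) ℝ → ℝ) (hf : Continuous f)
    (C a : ℝ) (hC : 0 ≤ C) (ha : (k : ℝ) + m - 1 < a)
    (hbound : ∀ x : Matrix (Fin n) (Fin m) ℝ,
      |f x| ≤ C * Matrix.det (1 + xᵀ * x) ^ (-(a / 2)))
    (γ : Matrix (Fin n) (Fin n) ℝ) (hγ : γ ∈ Matrix.orthogonalGroup (Fin n) ℝ)
    (t : Matrix (Fin (n - k)) (Fin m) ℝ) :
    Integrable (fun ω : Matrix (Fin k) (Fin m) ℝ => f (γ * blockRows ω t)) := by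
  haveI : OpensMeasurableSpace (Matrix (Fin k) (Fin m) ℝ) :=
    (inferInstance : OpensMeasurableSpace (Fin k → Fin m → ℝ))
  have hkn' : k ≤ n := by omega
  set A0 : Matrix (Fin m) (Fin m) ℝ := 1 + tᵀ * t with hA0
  have hA0pos : A0.PosDef := Matrix.PosDef.one.add_posSemidef (posSemidef_gram t)
  have hγγ : γᵀ * γ = 1 := by
    have h := (Matrix.mem_orthogonalGroup_iff' (Fin n) ℝ).1 hγ
    exact h
  have hgram : ∀ ω : Matrix (Fin k) (Fin m) ℝ,
      1 + (γ * blockRows ω t)ᵀ * (γ * blockRows ω t) = A0 + ωᵀ * ω := by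
    intro ω
    rw [Matrix.transpose_mul, Matrix.mul_assoc, ← Matrix.mul_assoc γᵀ γ, hγγ, Matrix.one_mul,
      blockRows_gram hkn' ω t, hA0]
    abel
  have hbound2 : ∀ ω : Matrix (Fin k) (Fin m) ℝ,
      ‖f (γ * blockRows ω t)‖ ≤ C * (A0 + ωᵀ * ω).det ^ (-(a/2)) := by
    intro ω
    rw [Real.norm_eq_abs]
    have h := hbound (γ * blockRows ω t)
    rwa [hgram ω] at h
  have hbr : Continuous fun ω : Matrix (Fin k) (Fin m) ℝ => blockRows ω t := by
    apply continuous_matrix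
    intro i j
    by_cases h : (i : ℕ) < k
    · simp only [blockRows, dif_pos h]
      exact (continuous_apply j).comp (continuous_apply _)
    · simp only [blockRows, dif_neg h]
      exact continuous_const
  have hcont : Continuous fun ω : Matrix (Fin k) (Fin m) ℝ => γ * blockRows ω t :=
    continuous_const.matrix_mul hbr
  have hintg : Integrable
      (fun ω : Matrix (Fin k) (Fin m) ℝ => C * (A0 + ωᵀ * ω).det ^ (-(a/2))) := by
    have h := (lemA m k a ha A0 hA0pos).const_mul C
    exact h
  exact hintg.mono' (hf.comp hcont).aestronglyMeasurable
    (Filter.Eventually.of_forall hbound2)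
end
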